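/- arXiv:2210.14736 — 2 statements merged into one kernel-verified Lean document; each statement's English description precedes it below -/
import Mathlib

section
/- Let d ≥ 2 and A ≥ 1 be integers. Let 𝓗 be a family of hyperplanes in ℝ^d of the form X_d = b + Σ_{i=1}^{d-1} a_i X_i with coefficients a_i ∈ {1,…,A}, and suppose 𝓗' ⊆ 𝓗 consists of pairwise distinct hyperplanes with |𝓗'| ≥ A^{d-2} + 1. Then the hyperplanes in 𝓗' have at most one point of ℝ^d in common, i.e., |⋂_{h ∈ 𝓗'} h| ≤ 1. -/
/-!
Two distinct common points `x ≠ y` of the hyperplanes in `𝓗'` give a nonzero direction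
`v = x' - y'` (the first `d - 1` coordinates) with `⟨a, v⟩ = x_d - y_d` for every coefficient
vector `a` of `𝓗'`. Choosing `j` with `v j ≠ 0`, this equation determines `a j` from the other
coordinates, so forgetting `a j` is injective and there are at most `A ^ (d - 2)` slope vectors.
A hyperplane through `x` is determined by its slopes, so `|𝓗'| ≤ A ^ (d - 2)`.
-/

open Finset

section Counting

variable {ι K : Type*} [Fintype ι] [DecidableEq ι] [Field K] [CharZero K]

lemma eq_of_forall_ne_of_sum_mul_eq {v : ι → K} {j : ι} (hj : v j ≠ 0) {a a' : ι → ℤ}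
    (hsum : ∑ i, (a i : K) * v i = ∑ i, (a' i : K) * v i) (hne : ∀ i, i ≠ j → a i = a' i) :
    a = a' := by
  have hdiff : ((a j - a' j : ℤ) : K) * v j = 0 := by
    rw [← sum_eq_single (s := univ) (f := fun i => ((a i - a' i : ℤ) : K) * v i) j
      (fun i _ hij => by simp [hne i hij]) (by simp)]
    simp [sub_mul, hsum]
  have hj_eq : a j = a' j :=
    sub_eq_zero.mp (Int.cast_eq_zero.mp ((mul_eq_zero.mp hdiff).resolve_right hj))
  funext i
  by_cases hij : i = j
  · exact hij ▸ hj_eq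
  · exact hne i hij

lemma card_le_pow_of_sum_mul_eq (T : Finset ℤ) (s : Finset (ι → ℤ))
    (hT : ∀ a ∈ s, ∀ i, a i ∈ T) {v : ι → K} (hv : v ≠ 0) {c : K}
    (hc : ∀ a ∈ s, ∑ i, (a i : K) * v i = c) :
    s.card ≤ T.card ^ (Fintype.card ι - 1) := by
  obtain ⟨j, hj⟩ : ∃ j, v j ≠ 0 := Function.ne_iff.mp hv
  have hmaps : Set.MapsTo (fun (a : ι → ℤ) (i : {i // i ≠ j}) => a i) s
      (Fintype.piFinset fun _ => T : Finset ({i // i ≠ j} → ℤ)) := fun a ha =>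
    Fintype.mem_piFinset.mpr fun i => hT a ha i
  have hinj : Set.InjOn (fun (a : ι → ℤ) (i : {i // i ≠ j}) => a i) s :=
    fun a ha a' ha' heq => eq_of_forall_ne_of_sum_mul_eq hj ((hc a ha).trans (hc a' ha').symm)
      fun i hij => congrFun heq ⟨i, hij⟩
  calc s.card ≤ (Fintype.piFinset fun (_ : {i // i ≠ j}) => T).card :=
        card_le_card_of_injOn _ hmaps hinj
    _ = T.card ^ (Fintype.card ι - 1) := by
        rw [Fintype.card_piFinset, prod_const, card_univ, Fintype.card_subtype_compl,
          Fintype.card_subtype_eq]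

end Counting

section Hyperplanes

variable {e : ℕ}

def OnHyperplane (h : (Fin e → ℤ) × ℤ) (x : Fin (e + 1) → ℝ) : Prop :=
  x (Fin.last e) = (h.2 : ℝ) + ∑ i : Fin e, (h.1 i : ℝ) * x i.castSucc

lemma OnHyperplane.eq_of_fst_eq {h h' : (Fin e → ℤ) × ℤ} {x : Fin (e + 1) → ℝ}
    (hx : OnHyperplane h x) (hx' : OnHyperplane h' x) (hfst : h.1 = h'.1) : h = h' := by
  refine Prod.ext hfst ?_
  unfold OnHyperplane at hx hx'
  rw [hfst] at hx
  exact_mod_cast add_right_cancel (hx.symm.trans hx')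

lemma OnHyperplane.eq_of_castSucc_eq {h : (Fin e → ℤ) × ℤ} {x y : Fin (e + 1) → ℝ}
    (hx : OnHyperplane h x) (hy : OnHyperplane h y) (hxy : ∀ i : Fin e, x i.castSucc = y i.castSucc) :
    x = y := by
  have hlast : x (Fin.last e) = y (Fin.last e) := by
    rw [hx, hy]
    simp only [hxy]
  exact funext fun i => Fin.lastCases hlast hxy i

lemma OnHyperplane.sum_mul_sub_eq {h : (Fin e → ℤ) × ℤ} {x y : Fin (e + 1) → ℝ}
    (hx : OnHyperplane h x) (hy : OnHyperplane h y) :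
    ∑ i, (h.1 i : ℝ) * (x i.castSucc - y i.castSucc) = x (Fin.last e) - y (Fin.last e) := by
  rw [hx, hy]
  simp only [mul_sub, sum_sub_distrib]
  ring

end Hyperplanes

theorem stmt_4_general (e : ℕ) (A : ℕ)
    (𝓗' : Finset ((Fin e → ℤ) × ℤ))
    (hcoef : ∀ h ∈ 𝓗', ∀ i : Fin e, h.1 i ∈ Finset.Icc (1 : ℤ) (A : ℤ))
    (hcard : A ^ (e - 1) + 1 ≤ 𝓗'.card) :
    {x : Fin (e + 1) → ℝ | ∀ h ∈ 𝓗',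
        x (Fin.last e) = (h.2 : ℝ) + ∑ i : Fin e, (h.1 i : ℝ) * x i.castSucc}.Subsingleton := by
  intro x hx y hy
  change ∀ h ∈ 𝓗', OnHyperplane h x at hx
  change ∀ h ∈ 𝓗', OnHyperplane h y at hy
  by_contra hne
  obtain ⟨h₀, hh₀⟩ : 𝓗'.Nonempty := card_pos.mp (by omega)
  have hv : (fun i : Fin e => x i.castSucc - y i.castSucc) ≠ 0 := fun hv =>
    hne ((hx h₀ hh₀).eq_of_castSucc_eq (hy h₀ hh₀) fun i => sub_eq_zero.mp (congrFun hv i))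
  have hslopes : (𝓗'.image Prod.fst).card = 𝓗'.card :=
    card_image_of_injOn fun h hh h' hh' => (hx h hh).eq_of_fst_eq (hx h' hh')
  have hbound := card_le_pow_of_sum_mul_eq (Icc (1 : ℤ) A) (𝓗'.image Prod.fst)
    (by simpa using hcoef) hv (c := x (Fin.last e) - y (Fin.last e))
    (by simpa using fun h hh => (hx h hh).sum_mul_sub_eq (hy h hh))
  rw [hslopes, Int.card_Icc, Fintype.card_fin] at hbound
  simp only [add_sub_cancel_right, Int.toNat_natCast] at hbound
  omega

/-- Let `d = e+1 ≥ 2` and `A ≥ 1`. Any family `𝓗'` of at least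
`A^(d-2) + 1` pairwise distinct hyperplanes `X_d = b + ∑ aᵢ Xᵢ`
(identified with their coefficient tuples `(a, b)`) with all `aᵢ ∈ {1,…,A}`
has at most one point of `ℝ^d` in common. -/
theorem stmt_4 (e : ℕ) (he : 1 ≤ e) (A : ℕ) (hA : 1 ≤ A)
    (𝓗' : Finset ((Fin e → ℤ) × ℤ))
    (hcoef : ∀ h ∈ 𝓗', ∀ i : Fin e, h.1 i ∈ Finset.Icc (1 : ℤ) (A : ℤ))
    (hcard : A ^ (e - 1) + 1 ≤ 𝓗'.card) :
    {x : Fin (e + 1) → ℝ | ∀ h ∈ 𝓗',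
        x (Fin.last e) = (h.2 : ℝ) + ∑ i : Fin e, (h.1 i : ℝ) * x i.castSucc}.Subsingleton :=
  stmt_4_general e A 𝓗' hcoef hcard
end

section
/- Let d ≥ 2 and let s, N, A, B be positive integers with B + (d-1)·A·s ≤ N. Let G = {1,…,s}^{d-1} × {1,…,N}, let 𝓗 be the family of all hyperplanes X_d = b + Σ_{i=1}^{d-1} a_i X_i with a_i ∈ {1,…,A}, b ∈ {1,…,B}, and consider the bipartite incidence graph between G and 𝓗 (point g adjacent to hyperplane h iff g ∈ h). Then this graph contains no complete bipartite subgraph K_{2, A^{d-2}+1}: no two distinct points of G lie simultaneously on A^{d-2}+1 distinct hyperplanes of 𝓗. -/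
/-!
If two distinct points lie on the hyperplanes `y = b + ∑ aᵢ xᵢ` of a family and differ in the
horizontal coordinate `j`, then every such hyperplane satisfies `∑ aᵢ (xᵢ - x'ᵢ) = y - y'`, so its
coefficient `aⱼ` and then `b` are determined by the other coefficients `aᵢ` (`i ≠ j`). Hence the
family has at most `A ^ (d - 2)` members. If the points differ only in the last coordinate, no
hyperplane of this form passes through both.
-/

open Finset

variable {R ι : Type*} [CommRing R] [Fintype ι]

theorem sum_mul_sub_eq_sub_of_incident {a x x' : ι → R} {b y y' : R}
    (h : y = b + ∑ i, a i * x i) (h' : y' = b + ∑ i, a i * x' i) :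
    ∑ i, a i * (x i - x' i) = y - y' := by
  simp only [mul_sub, sum_sub_distrib, h, h']
  ring

theorem eq_of_incident_of_forall_ne_eq [NoZeroDivisors R]
    {a a' x x' : ι → R} {b b' y y' : R} {j : ι}
    (hj : x j ≠ x' j) (ha : ∀ i ≠ j, a i = a' i)
    (h₁ : y = b + ∑ i, a i * x i) (h₂ : y' = b + ∑ i, a i * x' i)
    (h₁' : y = b' + ∑ i, a' i * x i) (h₂' : y' = b' + ∑ i, a' i * x' i) :
    (a, b) = (a', b') := by
  have hsum : ∑ i, (a i - a' i) * (x i - x' i) = 0 := by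
    simp only [sub_mul, sum_sub_distrib, sum_mul_sub_eq_sub_of_incident h₁ h₂,
      sum_mul_sub_eq_sub_of_incident h₁' h₂', sub_self]
  rw [sum_eq_single j (fun i _ hi => by rw [ha i hi, sub_self, zero_mul])
    (fun hj' => absurd (mem_univ j) hj')] at hsum
  have haj : a j = a' j :=
    sub_eq_zero.mp ((mul_eq_zero.mp hsum).resolve_right (sub_ne_zero.mpr hj))
  have ha' : a = a' := funext fun i => by
    by_cases hi : i = j
    · exact hi ▸ haj
    · exact ha i hi
  subst ha'
  exact Prod.ext rfl (add_right_cancel (h₁.symm.trans h₁'))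

theorem card_le_of_forall_incident [NoZeroDivisors R]
    (H : Finset ((ι → R) × R)) (S : Finset R) (hS : ∀ h ∈ H, ∀ i, h.1 i ∈ S)
    {x x' : ι → R} {y y' : R} (hne : (x, y) ≠ (x', y'))
    (hinc : ∀ h ∈ H, y = h.2 + ∑ i, h.1 i * x i ∧ y' = h.2 + ∑ i, h.1 i * x' i) :
    #H ≤ #S ^ (Fintype.card ι - 1) := by
  classical
  by_cases hx : x = x'
  · subst hx
    have hH : H = ∅ := eq_empty_of_forall_notMem fun h hh => by
      obtain ⟨hy, hy'⟩ := hinc h hh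
      exact hne (by rw [hy, hy'])
    simp [hH]
  obtain ⟨j, hj⟩ := Function.ne_iff.mp hx
  calc #H ≤ #(Fintype.piFinset fun _ : {i // i ≠ j} => S) :=
        card_le_card_of_injOn (fun h i => h.1 i)
          (fun h hh => Fintype.mem_piFinset.mpr fun i => hS h hh i)
          (fun h hh h' hh' heq => eq_of_incident_of_forall_ne_eq hj
            (fun i hi => congrFun heq ⟨i, hi⟩) (hinc h hh).1 (hinc h hh).2
            (hinc h' hh').1 (hinc h' hh').2)
    _ = #S ^ (Fintype.card ι - 1) := by simp

theorem stmt_8_general (e : ℕ) (A B : ℕ)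
    (g₁ g₂ : Fin (e + 1) → ℤ)
    (hne : g₁ ≠ g₂)
    (𝓗' : Finset ((Fin e → ℤ) × ℤ))
    (hcoef : ∀ h ∈ 𝓗', (∀ i : Fin e, h.1 i ∈ Finset.Icc (1 : ℤ) (A : ℤ)) ∧
        h.2 ∈ Finset.Icc (1 : ℤ) (B : ℤ))
    (hinc : ∀ h ∈ 𝓗',
        g₁ (Fin.last e) = h.2 + ∑ i : Fin e, h.1 i * g₁ i.castSucc ∧
        g₂ (Fin.last e) = h.2 + ∑ i : Fin e, h.1 i * g₂ i.castSucc) :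
    𝓗'.card ≤ A ^ (e - 1) := by
  have hsplit : (Fin.init g₁, g₁ (Fin.last e)) ≠ (Fin.init g₂, g₂ (Fin.last e)) := by
    intro h
    rw [Prod.mk.injEq] at h
    exact hne (by rw [← Fin.snoc_init_self g₁, ← Fin.snoc_init_self g₂, h.1, h.2])
  simpa using card_le_of_forall_incident 𝓗' (Icc 1 (A : ℤ)) (fun h hh => (hcoef h hh).1)
    hsplit hinc

/-- With `d = e+1 ≥ 2`, positive `s, N, A, B`, `B + (d-1)·A·s ≤ N`,
the incidence graph between the grid `G = {1,…,s}^(d-1) × {1,…,N}` and the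
family of hyperplanes `x_d = b + ∑ aᵢ xᵢ` (`aᵢ ∈ {1,…,A}`, `b ∈ {1,…,B}`)
contains no `K_{2, A^(d-2)+1}`: no two distinct grid points lie simultaneously
on `A^(d-2)+1` distinct hyperplanes. -/
theorem stmt_8 (e : ℕ) (he : 1 ≤ e) (s N A B : ℕ)
    (hs : 0 < s) (hN : 0 < N) (hA : 0 < A) (hB : 0 < B)
    (hcond : B + e * A * s ≤ N)
    (g₁ g₂ : Fin (e + 1) → ℤ)
    (hg₁ : (∀ i : Fin e, g₁ i.castSucc ∈ Finset.Icc (1 : ℤ) (s : ℤ)) ∧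
           g₁ (Fin.last e) ∈ Finset.Icc (1 : ℤ) (N : ℤ))
    (hg₂ : (∀ i : Fin e, g₂ i.castSucc ∈ Finset.Icc (1 : ℤ) (s : ℤ)) ∧
           g₂ (Fin.last e) ∈ Finset.Icc (1 : ℤ) (N : ℤ))
    (hne : g₁ ≠ g₂)
    (𝓗' : Finset ((Fin e → ℤ) × ℤ))
    (hcoef : ∀ h ∈ 𝓗', (∀ i : Fin e, h.1 i ∈ Finset.Icc (1 : ℤ) (A : ℤ)) ∧
        h.2 ∈ Finset.Icc (1 : ℤ) (B : ℤ))
    (hinc : ∀ h ∈ 𝓗',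
        g₁ (Fin.last e) = h.2 + ∑ i : Fin e, h.1 i * g₁ i.castSucc ∧
        g₂ (Fin.last e) = h.2 + ∑ i : Fin e, h.1 i * g₂ i.castSucc) :
    𝓗'.card ≤ A ^ (e - 1) :=
  stmt_8_general e A B g₁ g₂ hne 𝓗' hcoef hinc
end
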